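/- arXiv:0904.2871 — 2 statements merged into one kernel-verified Lean document; each statement's English description precedes it below -/
import Mathlib

section
/- For every x ∈ ℝ and z ∈ ℂ, the value at 1 of the solution of the translated equation satisfies φ(1,z,x) = φ(1,z)·θ(x,z)² − θ'(1,z)·φ(x,z)² + 2β(z)·θ(x,z)·φ(x,z), where ' denotes the derivative in the first (space) variable. -/
open MeasureTheory

noncomputable section

/-- `y` together with its x-derivative `y'` solves `-y'' + p·y = z²·y` on `ℝ`,
with `y'` locally absolutely continuous; this is encoded by requiring that `y'`
is everywhere the derivative of `y` and that `y'` is the integral of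
`(p - z²)·y` (the equation holding a.e.). -/
def IsSol (p : ℝ → ℝ) (z : ℂ) (y y' : ℝ → ℂ) : Prop :=
  (∀ x : ℝ, HasDerivAt y (y' x) x) ∧
  (∀ x : ℝ, y' x = y' 0 + ∫ s in (0:ℝ)..x, ((p s : ℂ) - z ^ 2) * y s)

/-!
Solutions of `y'' = Q y` with locally integrable `Q` have constant Wronskian: the Wronskian is
absolutely continuous and its derivative vanishes almost everywhere. Hence every solution `y` expands
in a pair of solutions `u, v` as `y · W(u,v) = W(y,v) · u - W(y,u) · v`. By periodicity `θ(·+1)` and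
`φ(·+1)` solve the same equation as `θ` and `φ`, and expanding them in `θ, φ` gives
`φ(x+1) = φ(1)θ(x) + φ'(1)φ(x)` and `θ(x+1) = θ(1)θ(x) + θ'(1)φ(x)`. Expanding `φ(·,z,x)` in
`θ(·+x), φ(·+x)`, whose Wronskian is `1`, gives `φ(1,z,x) = θ(x)φ(x+1) - φ(x)θ(x+1)`, and
substituting the two shift relations yields the identity.
-/

open Set intervalIntegral

theorem IntervalIntegrable.of_ae_periodic {E : Type*} [NormedAddCommGroup E] {f : ℝ → E}
    {T : ℝ} (hT : 0 < T) (hf : ∀ᵐ x ∂volume, f (x + T) = f x)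
    (h₀ : IntervalIntegrable f volume 0 T) (a b : ℝ) : IntervalIntegrable f volume a b := by
  have hshift : ∀ t, IntervalIntegrable f volume t (t + T) ↔
      IntervalIntegrable (fun x => f (x + T)) volume t (t + T) := fun t =>
    intervalIntegrable_congr_ae (Filter.EventuallyEq.symm (ae_restrict_of_ae hf))
  have hperiod : ∀ n : ℤ, IntervalIntegrable f volume (n * T) (n * T + T) := by
    intro n
    induction n using Int.induction_on with
    | zero => simpa using h₀
    | succ n ih =>
      simpa [add_mul, add_assoc] using ((hshift _).1 ih).comp_sub_right T
    | pred n ih =>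
      refine (hshift _).2 ?_
      simpa [sub_mul, add_assoc] using ih.comp_add_right T
  obtain ⟨N, hN⟩ := exists_nat_ge ((|a| + |b|) / T)
  have hbound := (div_le_iff₀ hT).1 hN
  have hNT : -(N * T) ≤ N * T := by nlinarith [abs_nonneg a, abs_nonneg b]
  have hmem : ∀ c, |c| ≤ N * T → c ∈ uIcc (-(N * T)) (N * T) := fun c hc => by
    rw [uIcc_of_le hNT]; exact abs_le.1 hc
  refine IntervalIntegrable.mono_set ?_ (uIcc_subset_uIcc
    (hmem a (by linarith [abs_nonneg b])) (hmem b (by linarith [abs_nonneg a])))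
  have := IntervalIntegrable.trans_iterate (a := fun k : ℕ => (k - N : ℝ) * T) (n := 2 * N)
    (fun k _ => by convert hperiod (k - N) using 1 <;> push_cast <;> ring)
  convert this using 1 <;> push_cast <;> ring

theorem AbsolutelyContinuousOnInterval.of_dist_le {X Y : Type*} [PseudoMetricSpace X]
    [PseudoMetricSpace Y] {f : ℝ → X} {g : ℝ → Y} {a b : ℝ}
    (hg : AbsolutelyContinuousOnInterval g a b)
    (h : ∀ x ∈ uIcc a b, ∀ y ∈ uIcc a b, dist (f x) (f y) ≤ dist (g x) (g y)) :
    AbsolutelyContinuousOnInterval f a b := by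
  refine squeeze_zero'
    (Filter.Eventually.of_forall fun _ => Finset.sum_nonneg fun _ _ => dist_nonneg) ?_ hg
  rw [Filter.eventually_inf_principal]
  filter_upwards with E hE
  exact Finset.sum_le_sum fun i hi => h _ (hE.1 i hi).1 _ (hE.1 i hi).2

theorem IntervalIntegrable.absolutelyContinuousOnInterval_primitive {E : Type*}
    [NormedAddCommGroup E] [NormedSpace ℝ E] {f : ℝ → E} {a b c : ℝ}
    (h : IntervalIntegrable f volume a b) (hc : c ∈ uIcc a b) :
    AbsolutelyContinuousOnInterval (fun x => ∫ t in c..x, f t) a b := by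
  refine (h.norm.absolutelyContinuousOnInterval_intervalIntegral hc).of_dist_le
    fun x hx y hy => ?_
  have hi : ∀ z ∈ uIcc a b, IntervalIntegrable f volume c z :=
    fun z hz => h.mono_set (uIcc_subset_uIcc hc hz)
  rw [dist_eq_norm, Real.dist_eq, integral_interval_sub_left (hi x hx) (hi y hy),
    integral_interval_sub_left (hi x hx).norm (hi y hy).norm]
  exact norm_integral_le_abs_integral_norm

def IsSolution {𝕜 : Type*} [RCLike 𝕜] (Q y y' : ℝ → 𝕜) : Prop :=
  (∀ x, HasDerivAt y (y' x) x) ∧ ∀ x, y' x = y' 0 + ∫ s in (0 : ℝ)..x, Q s * y s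

def wronskian {R : Type*} [Ring R] (u u' v v' : ℝ → R) (x : ℝ) : R :=
  u x * v' x - u' x * v x

namespace IsSolution

variable {𝕜 : Type*} [RCLike 𝕜] {Q y y' : ℝ → 𝕜}

theorem continuous (h : IsSolution Q y y') : Continuous y :=
  continuous_iff_continuousAt.2 fun x => (h.1 x).continuousAt

theorem intervalIntegrable_mul (hQ : ∀ a b, IntervalIntegrable Q volume a b)
    (h : IsSolution Q y y') (a b : ℝ) : IntervalIntegrable (fun s => Q s * y s) volume a b :=
  (hQ a b).mul_continuousOn h.continuous.continuousOn

theorem deriv_eq_add_integral (hQ : ∀ a b, IntervalIntegrable Q volume a b)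
    (h : IsSolution Q y y') (a x : ℝ) : y' x = y' a + ∫ s in a..x, Q s * y s := by
  rw [h.2 x, h.2 a, ← integral_interval_sub_left
    (h.intervalIntegrable_mul hQ 0 x) (h.intervalIntegrable_mul hQ 0 a)]
  ring

theorem continuous_deriv (hQ : ∀ a b, IntervalIntegrable Q volume a b)
    (h : IsSolution Q y y') : Continuous y' := by
  rw [funext h.2]
  exact continuous_const.add (continuous_primitive (h.intervalIntegrable_mul hQ) 0)

theorem absolutelyContinuousOnInterval (hQ : ∀ a b, IntervalIntegrable Q volume a b)
    (h : IsSolution Q y y') (a b : ℝ) : AbsolutelyContinuousOnInterval y a b := by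
  have hderiv : deriv y = y' := funext fun x => (h.1 x).deriv
  have hy : ContDiff ℝ 1 y := contDiff_one_iff_deriv.2
    ⟨fun x => (h.1 x).differentiableAt, hderiv ▸ h.continuous_deriv hQ⟩
  exact hy.contDiffOn.absolutelyContinuousOnInterval

theorem absolutelyContinuousOnInterval_deriv (hQ : ∀ a b, IntervalIntegrable Q volume a b)
    (h : IsSolution Q y y') (a b : ℝ) : AbsolutelyContinuousOnInterval y' a b := by
  refine ((h.intervalIntegrable_mul hQ a b).absolutelyContinuousOnInterval_primitive
    left_mem_uIcc).of_dist_le fun x _ z _ => ?_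
  rw [h.deriv_eq_add_integral hQ a x, h.deriv_eq_add_integral hQ a z, dist_add_left]

theorem ae_hasDerivAt_deriv (hQ : ∀ a b, IntervalIntegrable Q volume a b)
    (h : IsSolution Q y y') (a b : ℝ) :
    ∀ᵐ x, x ∈ uIcc a b → HasDerivAt y' (Q x * y x) x := by
  filter_upwards [(h.intervalIntegrable_mul hQ a b).ae_hasDerivAt_integral] with x hx hxab
  rw [funext (h.deriv_eq_add_integral hQ a)]
  exact (hx hxab a left_mem_uIcc).const_add (y' a)

theorem wronskian_eq {u u' v v' : ℝ → 𝕜} (hQ : ∀ a b, IntervalIntegrable Q volume a b)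
    (hu : IsSolution Q u u') (hv : IsSolution Q v v') (a b : ℝ) :
    wronskian u u' v v' b = wronskian u u' v v' a := by
  have hac : AbsolutelyContinuousOnInterval (wronskian u u' v v') a b :=
    ((hu.absolutelyContinuousOnInterval hQ a b).fun_smul
      (hv.absolutelyContinuousOnInterval_deriv hQ a b)).sub
    ((hu.absolutelyContinuousOnInterval_deriv hQ a b).fun_smul
      (hv.absolutelyContinuousOnInterval hQ a b))
  have hder : ∀ᵐ x, x ∈ uIcc a b → HasDerivAt (wronskian u u' v v') 0 x := by
    filter_upwards [hu.ae_hasDerivAt_deriv hQ a b, hv.ae_hasDerivAt_deriv hQ a b]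
      with x hxu hxv hx
    exact (((hu.1 x).mul (hxv hx)).sub ((hxu hx).mul (hv.1 x))).congr_deriv (by ring)
  obtain ⟨C, hC⟩ := hac.const_of_ae_hasDerivAt_zero hder
  rw [hC b right_mem_uIcc, hC a left_mem_uIcc]

theorem mul_wronskian_eq {u u' v v' : ℝ → 𝕜} (hQ : ∀ a b, IntervalIntegrable Q volume a b)
    (hu : IsSolution Q u u') (hv : IsSolution Q v v') (hy : IsSolution Q y y') (x : ℝ) :
    y x * wronskian u u' v v' 0
      = wronskian y y' v v' 0 * u x - wronskian y y' u u' 0 * v x := by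
  rw [← hu.wronskian_eq hQ hv 0 x, ← hy.wronskian_eq hQ hv 0 x, ← hy.wronskian_eq hQ hu 0 x]
  simp only [wronskian]
  ring

theorem comp_add_const (hQ : ∀ a b, IntervalIntegrable Q volume a b)
    (h : IsSolution Q y y') (τ : ℝ) :
    IsSolution (fun s => Q (s + τ)) (fun s => y (s + τ)) (fun s => y' (s + τ)) := by
  refine ⟨fun s => (h.1 (s + τ)).comp_add_const s τ, fun s => ?_⟩
  have hshift := integral_comp_add_right (fun r => Q r * y r) τ (a := 0) (b := s)
  show y' (s + τ) = y' (0 + τ) + ∫ r in (0 : ℝ)..s, Q (r + τ) * y (r + τ)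
  rw [hshift, zero_add, ← h.deriv_eq_add_integral hQ]

theorem congr_ae {Q' : ℝ → 𝕜} (hQQ' : Q =ᵐ[volume] Q') (h : IsSolution Q y y') :
    IsSolution Q' y y' := by
  refine ⟨h.1, fun s => ?_⟩
  rw [h.2 s, intervalIntegral.integral_congr_ae]
  filter_upwards [hQQ'] with r hr _
  rw [hr]

theorem eq_fundamental_combination {θ θ' φ φ' : ℝ → 𝕜}
    (hQ : ∀ a b, IntervalIntegrable Q volume a b) (hy : IsSolution Q y y')
    (hθ : IsSolution Q θ θ') (hφ : IsSolution Q φ φ') (hθ0 : θ 0 = 1) (hθ'0 : θ' 0 = 0)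
    (hφ0 : φ 0 = 0) (hφ'0 : φ' 0 = 1) (x : ℝ) :
    y x = y 0 * θ x + y' 0 * φ x := by
  have h := hθ.mul_wronskian_eq hQ hφ hy x
  simp only [wronskian, hθ0, hθ'0, hφ0, hφ'0] at h
  linear_combination h

theorem eq_translate_combination {θ θ' φ φ' ψ ψ' : ℝ → 𝕜} {τ : ℝ}
    (hQ : ∀ a b, IntervalIntegrable Q volume a b) (hψ : IsSolution (fun s => Q (s + τ)) ψ ψ')
    (hψ0 : ψ 0 = 0) (hψ'0 : ψ' 0 = 1)
    (hθ : IsSolution Q θ θ') (hφ : IsSolution Q φ φ') (hθ0 : θ 0 = 1) (hθ'0 : θ' 0 = 0)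
    (hφ0 : φ 0 = 0) (hφ'0 : φ' 0 = 1) (s : ℝ) :
    ψ s = θ τ * φ (s + τ) - φ τ * θ (s + τ) := by
  have hQτ : ∀ a b, IntervalIntegrable (fun s => Q (s + τ)) volume a b := fun a b => by
    simpa using (hQ (a + τ) (b + τ)).comp_add_right τ
  have hW : wronskian θ θ' φ φ' τ = 1 := by
    rw [hθ.wronskian_eq hQ hφ 0 τ]
    simp [wronskian, hθ0, hθ'0, hφ0, hφ'0]
  have h := mul_wronskian_eq hQτ (hθ.comp_add_const hQ τ) (hφ.comp_add_const hQ τ) hψ s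
  simp only [wronskian, zero_add, hψ0, hψ'0] at h hW
  linear_combination h - ψ s * hW

end IsSolution

/-- The identity `φ(1,z,x) = φ(1,z)θ(x,z)² − θ'(1,z)φ(x,z)² + 2β(z)θ(x,z)φ(x,z)`
for the solution `φ(·,z,x)` of the translated equation `−y'' + p(·+x)y = z²y`
with `y(0)=0, y'(0)=1`. -/
theorem statement_8
    (p : ℝ → ℝ)
    (hper : ∀ᵐ x ∂(volume : Measure ℝ), p (x + 1) = p x)
    (hpint : IntegrableOn p (Set.Icc 0 1))
    (θ φ θD φD : ℂ → ℝ → ℂ)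
    (hθ : ∀ z : ℂ, IsSol p z (θ z) (θD z))
    (hθ0 : ∀ z : ℂ, θ z 0 = 1) (hθD0 : ∀ z : ℂ, θD z 0 = 0)
    (hφ : ∀ z : ℂ, IsSol p z (φ z) (φD z))
    (hφ0 : ∀ z : ℂ, φ z 0 = 0) (hφD0 : ∀ z : ℂ, φD z 0 = 1)
    (φt φtD : ℂ → ℝ → ℝ → ℂ)
    (hφt : ∀ z : ℂ, ∀ τ : ℝ, IsSol (fun s => p (s + τ)) z (φt z τ) (φtD z τ))
    (hφt0 : ∀ z : ℂ, ∀ τ : ℝ, φt z τ 0 = 0)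
    (hφtD0 : ∀ z : ℂ, ∀ τ : ℝ, φtD z τ 0 = 1) :
    ∀ x : ℝ, ∀ z : ℂ,
      φt z x 1 = φ z 1 * θ z x ^ 2 - θD z 1 * φ z x ^ 2
          + 2 * ((φD z 1 - θ z 1) / 2) * θ z x * φ z x := by
  intro x z
  set Q : ℝ → ℂ := fun s => (p s : ℂ) - z ^ 2
  have hp : ∀ a b, IntervalIntegrable p volume a b := IntervalIntegrable.of_ae_periodic one_pos
    hper (IntegrableOn.intervalIntegrable (by rwa [uIcc_of_le zero_le_one]))
  have hQ : ∀ a b, IntervalIntegrable Q volume a b := fun a b =>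
    IntervalIntegrable.sub ⟨(hp a b).1.ofReal, (hp a b).2.ofReal⟩ intervalIntegrable_const
  have hQper : (fun s => Q (s + 1)) =ᵐ[volume] Q := by
    filter_upwards [hper] with s hs
    simp only [Q, hs]
  have hθs : IsSolution Q (θ z) (θD z) := hθ z
  have hφs : IsSolution Q (φ z) (φD z) := hφ z
  have hφ_shift := ((hφs.comp_add_const hQ 1).congr_ae hQper).eq_fundamental_combination hQ
    hθs hφs (hθ0 z) (hθD0 z) (hφ0 z) (hφD0 z) x
  have hθ_shift := ((hθs.comp_add_const hQ 1).congr_ae hQper).eq_fundamental_combination hQ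
    hθs hφs (hθ0 z) (hθD0 z) (hφ0 z) (hφD0 z) x
  have hφt_eq : φt z x 1 = θ z x * φ z (1 + x) - φ z x * θ z (1 + x) :=
    IsSolution.eq_translate_combination hQ (hφt z x) (hφt0 z x) (hφtD0 z x)
      hθs hφs (hθ0 z) (hθD0 z) (hφ0 z) (hφD0 z) 1
  simp only [zero_add, add_comm 1 x] at hφ_shift hθ_shift hφt_eq
  linear_combination hφt_eq + θ z x * hφ_shift - φ z x * hθ_shift
end
end

section
/- Fix z ∈ ℂ and m ∈ ℂ. Let f : ℝ → ℂ solve −f'' + (p+q)·f = z²·f on ℝ and coincide, together with its first derivative, with θ(·,z) + m·φ(·,z) on [t,∞). Then m·f(0) − f'(0) = ∫₀ᵗ q(x)·(θ(x,z) + m·φ(x,z))·f(x) dx. -/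
/-!
Put `ψ = θ + mφ`. The Wronskian `W = ψ f' - ψ' f` satisfies `W' = q ψ f` almost everywhere,
because the `p`-terms of the two equations cancel. Matching at `t` gives `W(t) = 0`, and
`W(0) = f'(0) - m f(0)`. Since `f'` is only absolutely continuous, `W` is integrated through
the fact that an absolutely continuous function with a.e. vanishing derivative is constant.
-/

open MeasureTheory Set Filter

noncomputable section

namespace AbsolutelyContinuousOnInterval

variable {X Y : Type*} [PseudoMetricSpace X] [PseudoMetricSpace Y] {a b : ℝ}

theorem of_dist_le_s12 {f : ℝ → X} {g : ℝ → Y} (hg : AbsolutelyContinuousOnInterval g a b)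
    (h : ∀ x ∈ uIcc a b, ∀ y ∈ uIcc a b, dist (f x) (f y) ≤ dist (g x) (g y)) :
    AbsolutelyContinuousOnInterval f a b := by
  refine squeeze_zero' (Eventually.of_forall fun _ => Finset.sum_nonneg fun _ _ => dist_nonneg)
    ?_ hg
  rw [eventually_inf_principal]
  filter_upwards with E hE
  exact Finset.sum_le_sum fun i hi => h _ (hE.1 i hi).1 _ (hE.1 i hi).2

end AbsolutelyContinuousOnInterval

section

variable {E : Type*} [NormedAddCommGroup E] [NormedSpace ℝ E] {a b : ℝ}

theorem IntervalIntegrable.absolutelyContinuousOnInterval_intervalIntegral' {g : ℝ → E} {c : ℝ}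
    (hg : IntervalIntegrable g volume a b) (hc : c ∈ uIcc a b) :
    AbsolutelyContinuousOnInterval (fun x => ∫ s in c..x, g s) a b := by
  refine (hg.norm.absolutelyContinuousOnInterval_intervalIntegral hc).of_dist_le_s12
    fun x hx y hy => ?_
  have hcx : uIcc c x ⊆ uIcc a b := uIcc_subset_uIcc hc hx
  have hcy : uIcc c y ⊆ uIcc a b := uIcc_subset_uIcc hc hy
  rw [dist_eq_norm, Real.dist_eq, intervalIntegral.integral_interval_sub_left
      (hg.mono_set hcx) (hg.mono_set hcy),
    intervalIntegral.integral_interval_sub_left (hg.norm.mono_set hcx) (hg.norm.mono_set hcy)]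
  exact intervalIntegral.norm_integral_le_abs_integral_norm

theorem absolutelyContinuousOnInterval_of_hasDerivAt {u u' : ℝ → E}
    (hu : ∀ x ∈ uIcc a b, HasDerivAt u (u' x) x) (hu' : ContinuousOn u' (uIcc a b)) :
    AbsolutelyContinuousOnInterval u a b := by
  obtain ⟨C, hC⟩ := isCompact_uIcc.exists_bound_of_continuousOn hu'
  refine LipschitzOnWith.absolutelyContinuousOnInterval (K := C.toNNReal) <|
    (convex_uIcc a b).lipschitzOnWith_of_nnnorm_hasDerivWithin_le
      (fun x hx => (hu x hx).hasDerivWithinAt) fun x hx => ?_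
  rw [← NNReal.coe_le_coe, coe_nnnorm, Real.coe_toNNReal']
  exact (hC x hx).trans (le_max_left _ _)

end

section Wronskian

variable {𝕜 : Type*} [RCLike 𝕜] {u u' v v' gu gv : ℝ → 𝕜} {a b : ℝ}

theorem wronskian_sub_eq_integral
    (hu : ∀ x, HasDerivAt u (u' x) x) (hv : ∀ x, HasDerivAt v (v' x) x)
    (hu' : ∀ x, u' x = u' a + ∫ s in a..x, gu s) (hv' : ∀ x, v' x = v' a + ∫ s in a..x, gv s)
    (hgu : IntervalIntegrable gu volume a b) (hgv : IntervalIntegrable gv volume a b) :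
    (u b * v' b - u' b * v b) - (u a * v' a - u' a * v a) =
      ∫ x in a..b, u x * gv x - gu x * v x := by
  have hu'_eq : u' = fun x => u' a + ∫ s in a..x, gu s := funext hu'
  have hv'_eq : v' = fun x => v' a + ∫ s in a..x, gv s := funext hv'
  have hu'_ac : AbsolutelyContinuousOnInterval u' a b := by
    rw [hu'_eq]
    exact (hgu.absolutelyContinuousOnInterval_intervalIntegral' left_mem_uIcc).of_dist_le_s12
      fun x _ y _ => (dist_add_left _ _ _).le
  have hv'_ac : AbsolutelyContinuousOnInterval v' a b := by
    rw [hv'_eq]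
    exact (hgv.absolutelyContinuousOnInterval_intervalIntegral' left_mem_uIcc).of_dist_le_s12
      fun x _ y _ => (dist_add_left _ _ _).le
  have hu_ac := absolutelyContinuousOnInterval_of_hasDerivAt (fun x _ => hu x) hu'_ac.continuousOn
  have hv_ac := absolutelyContinuousOnInterval_of_hasDerivAt (fun x _ => hv x) hv'_ac.continuousOn
  have hint : IntervalIntegrable (fun x => u x * gv x - gu x * v x) volume a b :=
    (hgv.continuousOn_mul hu_ac.continuousOn).sub (hgu.mul_continuousOn hv_ac.continuousOn)
  set F : ℝ → 𝕜 := fun x => (u x * v' x - u' x * v x) - ∫ s in a..x, u s * gv s - gu s * v s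
  have hF_ac : AbsolutelyContinuousOnInterval F a b := by
    have := (hu_ac.fun_smul hv'_ac).fun_sub (hu'_ac.fun_smul hv_ac) |>.fun_sub
      (hint.absolutelyContinuousOnInterval_intervalIntegral' left_mem_uIcc)
    simpa only [smul_eq_mul] using this
  have hF' : ∀ᵐ x, x ∈ uIcc a b → HasDerivAt F 0 x := by
    filter_upwards [hgu.ae_hasDerivAt_integral, hgv.ae_hasDerivAt_integral,
      hint.ae_hasDerivAt_integral] with x hxu hxv hxW hx
    have hdu' : HasDerivAt u' (gu x) x := by
      rw [hu'_eq]; exact (hxu hx a left_mem_uIcc).const_add _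
    have hdv' : HasDerivAt v' (gv x) x := by
      rw [hv'_eq]; exact (hxv hx a left_mem_uIcc).const_add _
    exact ((((hu x).mul hdv').sub (hdu'.mul (hv x))).sub (hxW hx a left_mem_uIcc)).congr_deriv
      (by ring)
  obtain ⟨C, hC⟩ := hF_ac.const_of_ae_hasDerivAt_zero hF'
  have hFab : F b = F a := (hC b right_mem_uIcc).trans (hC a left_mem_uIcc).symm
  simp only [F, intervalIntegral.integral_same, sub_zero] at hFab
  linear_combination hFab

end Wronskian

theorem intervalIntegrable_of_ae_periodic {E : Type*} [NormedAddCommGroup E] {p : ℝ → E}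
    {T t : ℝ} (hT : 0 < T) (hper : ∀ᵐ x, p (x + T) = p x)
    (hp : IntervalIntegrable p volume 0 T) (ht : 0 ≤ t) : IntervalIntegrable p volume 0 t := by
  have hstep : ∀ k : ℕ, IntervalIntegrable p volume (k * T) ((k + 1 : ℕ) * T) := by
    intro k
    induction k with
    | zero => simpa using hp
    | succ k ih =>
      have hshifted : IntervalIntegrable (fun x => p (x + T)) volume (k * T) ((k + 1 : ℕ) * T) :=
        ih.congr_ae (ae_restrict_of_ae (hper.mono fun _ hx => hx.symm))
      simpa [add_mul] using hshifted.comp_sub_right T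
  have hn := IntervalIntegrable.trans_iterate (a := fun k : ℕ => k * T) (n := ⌈t / T⌉₊)
    fun k _ => hstep k
  refine (by simpa using hn : IntervalIntegrable p volume 0 (⌈t / T⌉₊ * T)).mono_set ?_
  refine uIcc_subset_uIcc left_mem_uIcc ?_
  rw [uIcc_of_le (by positivity)]
  exact ⟨ht, (div_le_iff₀ hT).1 (Nat.le_ceil _)⟩

namespace IsSol

variable {p r : ℝ → ℝ} {z : ℂ} {u u' v v' : ℝ → ℂ} {a b : ℝ}

theorem continuous (hu : IsSol p z u u') : Continuous u :=
  continuous_iff_continuousAt.2 fun x => (hu.1 x).continuousAt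

theorem intervalIntegrable_potential_mul (hu : IsSol p z u u')
    (hp : IntervalIntegrable p volume a b) :
    IntervalIntegrable (fun s => ((p s : ℂ) - z ^ 2) * u s) volume a b := by
  have hpC : IntervalIntegrable (fun s => (p s : ℂ)) volume a b := ⟨hp.1.ofReal, hp.2.ofReal⟩
  exact (hpC.sub intervalIntegrable_const).mul_continuousOn hu.continuous.continuousOn

theorem wronskian_sub_eq_integral (hu : IsSol p z u u') (hv : IsSol r z v v')
    (hp : IntervalIntegrable p volume 0 b) (hr : IntervalIntegrable r volume 0 b) :
    (u b * v' b - u' b * v b) - (u 0 * v' 0 - u' 0 * v 0) =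
      ∫ x in 0..b, ((r x - p x : ℝ) : ℂ) * u x * v x := by
  rw [_root_.wronskian_sub_eq_integral hu.1 hv.1 hu.2 hv.2
    (hu.intervalIntegrable_potential_mul hp) (hv.intervalIntegrable_potential_mul hr)]
  refine intervalIntegral.integral_congr fun x _ => ?_
  push_cast
  ring

end IsSol

theorem statement_12_general
    (p q : ℝ → ℝ) (t : ℝ) (ht : 0 < t)
    (hper : ∀ᵐ x ∂(volume : Measure ℝ), p (x + 1) = p x)
    (hpint : IntegrableOn p (Set.Icc 0 1))
    (hq : Integrable q)
    (z m : ℂ)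
    (θ φ θD φD : ℝ → ℂ)
    (hθ : IsSol p z θ θD) (hθ0 : θ 0 = 1) (hθD0 : θD 0 = 0)
    (hφ : IsSol p z φ φD) (hφ0 : φ 0 = 0) (hφD0 : φD 0 = 1)
    (f fD : ℝ → ℂ)
    (hf : IsSol (fun x => p x + q x) z f fD)
    (hmatch : ∀ x : ℝ, t ≤ x → f x = θ x + m * φ x ∧ fD x = θD x + m * φD x) :
    m * f 0 - fD 0 = ∫ x in (0:ℝ)..t, (q x : ℂ) * (θ x + m * φ x) * f x := by
  have hp : IntervalIntegrable p volume 0 t := intervalIntegrable_of_ae_periodic one_pos hper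
    ((intervalIntegrable_iff_integrableOn_Icc_of_le zero_le_one).2 hpint) ht.le
  have hpq : IntervalIntegrable (fun x => p x + q x) volume 0 t := hp.add hq.intervalIntegrable
  have hθf := hθ.wronskian_sub_eq_integral hf hp hpq
  have hφf := hφ.wronskian_sub_eq_integral hf hp hpq
  simp only [add_sub_cancel_left] at hθf hφf
  have hq' : IntervalIntegrable (fun x => (q x : ℂ)) volume 0 t :=
    hq.ofReal.intervalIntegrable
  obtain ⟨hft, hfDt⟩ := hmatch t le_rfl
  calc m * f 0 - fD 0
      = (θ t * fD t - θD t * f t - (θ 0 * fD 0 - θD 0 * f 0))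
        + m * (φ t * fD t - φD t * f t - (φ 0 * fD 0 - φD 0 * f 0)) := by
        rw [hft, hfDt, hθ0, hθD0, hφ0, hφD0]; ring
    _ = (∫ x in 0..t, (q x : ℂ) * θ x * f x) + m * ∫ x in 0..t, (q x : ℂ) * φ x * f x := by
        rw [hθf, hφf]
    _ = ∫ x in (0:ℝ)..t, (q x : ℂ) * (θ x + m * φ x) * f x := by
        rw [← intervalIntegral.integral_const_mul, ← intervalIntegral.integral_add]
        · exact intervalIntegral.integral_congr fun x _ => by ring
        · exact (hq'.mul_continuousOn hθ.continuous.continuousOn).mul_continuousOn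
            hf.continuous.continuousOn
        · exact ((hq'.mul_continuousOn hφ.continuous.continuousOn).mul_continuousOn
            hf.continuous.continuousOn).const_mul m

/-- If `f` solves `-f''+(p+q)f = z²f` and coincides (with derivative) with
`θ + mφ` on `[t,∞)`, then `m·f(0) − f'(0) = ∫₀ᵗ q(x)(θ(x)+mφ(x))f(x)dx`. -/
theorem statement_12
    (p q : ℝ → ℝ) (t : ℝ) (ht : 0 < t)
    (hper : ∀ᵐ x ∂(volume : Measure ℝ), p (x + 1) = p x)
    (hpint : IntegrableOn p (Set.Icc 0 1))
    (hq : Integrable q) (hqsupp : Function.support q ⊆ Set.Icc 0 t)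
    (z m : ℂ)
    (θ φ θD φD : ℝ → ℂ)
    (hθ : IsSol p z θ θD) (hθ0 : θ 0 = 1) (hθD0 : θD 0 = 0)
    (hφ : IsSol p z φ φD) (hφ0 : φ 0 = 0) (hφD0 : φD 0 = 1)
    (f fD : ℝ → ℂ)
    (hf : IsSol (fun x => p x + q x) z f fD)
    (hmatch : ∀ x : ℝ, t ≤ x → f x = θ x + m * φ x ∧ fD x = θD x + m * φD x) :
    m * f 0 - fD 0 = ∫ x in (0:ℝ)..t, (q x : ℂ) * (θ x + m * φ x) * f x :=
  statement_12_general p q t ht hper hpint hq z m θ φ θD φD hθ hθ0 hθD0 hφ hφ0 hφD0 f fD hf hmatch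
end
end
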